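/- arXiv:1508.02860 — 3 statements merged into one kernel-verified Lean document; each statement's English description precedes it below -/
import Mathlib

section
/- Let M be a nonempty subsemigroup (under addition) of a finite-dimensional vector space V over ℚ. Then the convex cone ℚ_{≥0}M generated by M equals the ℚ-linear span of M if and only if M is a group (i.e., M is closed under negation). -/
/-- For a nonempty subsemigroup `M` of a finite-dimensional `ℚ`-vector space `V`,
the convex cone `ℚ≥0·M` generated by `M` equals the `ℚ`-linear span of `M` iff `M` is a group
(i.e. closed under negation). -/
theorem stmt1 {V : Type*} [AddCommGroup V] [Module ℚ V] [FiniteDimensional ℚ V]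
    (M : Set V) (hne : M.Nonempty) (hadd : ∀ a ∈ M, ∀ b ∈ M, a + b ∈ M) :
    (Submodule.span {c : ℚ // 0 ≤ c} M : Set V) = (Submodule.span ℚ M : Set V) ↔
      ∀ m ∈ M, -m ∈ M := by
  -- M is closed under positive nsmul
  have hnsmul : ∀ a ∈ M, ∀ n : ℕ, 0 < n → n • a ∈ M := by
    intro a ha n hn
    induction n with
    | zero => omega
    | succ k ih =>
      rcases Nat.eq_zero_or_pos k with hk | hk
      · subst hk; simpa using ha
      · have := ih hk
        rw [succ_nsmul]
        exact hadd _ this _ ha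
  constructor
  · -- forward direction
    intro h m hm
    -- The set T of x with x = 0 or k • x ∈ M for some k > 0 is a ℚ≥0-submodule containing M
    set T : Submodule {c : ℚ // 0 ≤ c} V :=
      { carrier := {x | x = 0 ∨ ∃ k : ℕ, 0 < k ∧ k • x ∈ M}
        zero_mem' := Or.inl rfl
        add_mem' := by
          rintro x y (rfl | ⟨k, hk, hkx⟩) hy
          · simpa using hy
          rcases hy with rfl | ⟨l, hl, hly⟩
          · right; exact ⟨k, hk, by simpa using hkx⟩
          · right
            refine ⟨k * l, Nat.mul_pos hk hl, ?_⟩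
            have : (k * l) • (x + y) = l • (k • x) + k • (l • y) := by
              rw [smul_add, mul_smul, smul_comm k l x, mul_smul k l y]
            rw [this]
            exact hadd _ (hnsmul _ hkx _ hl) _ (hnsmul _ hly _ hk)
        smul_mem' := by
          rintro c x (rfl | ⟨k, hk, hkx⟩)
          · left; simp
          rcases eq_or_lt_of_le c.2 with hc | hc
          · left
            have : c = 0 := Subtype.ext hc.symm
            simp [this]
          · right
            set q : ℚ := c.val with hq
            have hq0 : 0 < q := hc
            have hnum : 0 < q.num := Rat.num_pos.mpr hq0
            refine ⟨k * q.den, Nat.mul_pos hk q.pos, ?_⟩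
            have hden : (q.den : ℚ) * q = q.num := by
              rw [mul_comm, Rat.mul_den_eq_num]
            have key : (k * q.den) • (c • x) = q.num.toNat • (k • x) := by
              show (k * q.den) • (q • x) = q.num.toNat • (k • x)
              rw [← Nat.cast_smul_eq_nsmul ℚ (k * q.den), ← Nat.cast_smul_eq_nsmul ℚ q.num.toNat,
                ← Nat.cast_smul_eq_nsmul ℚ k x, smul_smul, smul_smul]
              congr 1
              have htn : ((q.num.toNat : ℕ) : ℚ) = (q.num : ℚ) := by
                exact_mod_cast congrArg (Int.cast : ℤ → ℚ) (Int.toNat_of_nonneg hnum.le)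
              push_cast
              rw [mul_assoc, hden, htn, mul_comm]
            rw [key]
            exact hnsmul _ hkx _ (by omega) }
    have hMT : M ⊆ (T : Set V) := by
      intro a ha
      right; exact ⟨1, one_pos, by simpa using ha⟩
    have hspan : (Submodule.span {c : ℚ // 0 ≤ c} M : Set V) ⊆ (T : Set V) :=
      Submodule.span_le.mpr hMT
    have hmem : -m ∈ (Submodule.span {c : ℚ // 0 ≤ c} M : Set V) := by
      rw [h]
      exact Submodule.neg_mem _ (Submodule.subset_span hm)
    rcases hspan hmem with h0 | ⟨k, hk, hkm⟩
    · have : m = 0 := by simpa [neg_eq_zero] using h0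
      rw [this] at hm ⊢; simpa using hm
    · rcases Nat.lt_or_ge k 2 with hk2 | hk2
      · interval_cases k
        simpa using hkm
      · have h1 : (k - 1) • m ∈ M := hnsmul _ hm _ (by omega)
        have : -m = k • (-m) + (k - 1) • m := by
          rw [smul_neg, ← Nat.cast_smul_eq_nsmul ℤ, ← Nat.cast_smul_eq_nsmul ℤ (k-1),
            ← neg_smul, ← add_smul]
          have : (-(k : ℤ) + ((k : ℕ) - 1 : ℕ)) = -1 := by
            push_cast [Nat.cast_sub (by omega : 1 ≤ k)]
            ring
          rw [this]; simp
        rw [this]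
        exact hadd _ hkm _ h1
  · -- reverse direction
    intro hneg
    have hneg_span : ∀ x ∈ Submodule.span {c : ℚ // 0 ≤ c} M, -x ∈ Submodule.span {c : ℚ // 0 ≤ c} M := by
      intro x hx
      induction hx using Submodule.span_induction with
      | mem a ha => exact Submodule.subset_span (hneg a ha)
      | zero => simp
      | add a b _ _ iha ihb => rw [neg_add]; exact Submodule.add_mem _ iha ihb
      | smul c a _ iha =>
        rw [show -(c • a) = c • (-a) from (smul_neg c a).symm]
        exact Submodule.smul_mem _ _ iha
    set p : Submodule ℚ V :=
      { carrier := (Submodule.span {c : ℚ // 0 ≤ c} M : Set V)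
        zero_mem' := Submodule.zero_mem _
        add_mem' := fun ha hb => Submodule.add_mem _ ha hb
        smul_mem' := by
          intro c x hx
          rcases le_or_gt 0 c with hc | hc
          · exact Submodule.smul_mem _ (⟨c, hc⟩ : {c : ℚ // 0 ≤ c}) hx
          · have : c • x = (⟨-c, by linarith⟩ : {c : ℚ // 0 ≤ c}) • (-x) := by
              show c • x = (-c) • (-x)
              simp
            rw [this]
            exact Submodule.smul_mem _ _ (hneg_span _ hx) }
    apply Set.Subset.antisymm
    · -- span ℚ≥0 M ⊆ span ℚ M
      intro x hx
      induction hx using Submodule.span_induction with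
      | mem a ha => exact Submodule.subset_span ha
      | zero => exact Submodule.zero_mem _
      | add a b _ _ iha ihb => exact Submodule.add_mem _ iha ihb
      | smul c a _ iha =>
        have : c • a = c.val • a := rfl
        rw [this]
        exact Submodule.smul_mem _ _ iha
    · exact Submodule.span_le (p := p).mpr Submodule.subset_span
end

section
/- Let Λ be a finitely generated free abelian group and let C be the intersection of Λ with a convex cone in Λ ⊗_ℤ ℚ generated by finitely many vectors. Then the monoid C is finitely generated. -/
private theorem myhden (q : ℚ) : (q.num : ℚ) = q * q.den := by
  have h := Rat.num_div_den q
  rw [div_eq_iff (by exact_mod_cast q.den_nz : ((q.den : ℚ)) ≠ 0)] at h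
  exact h

private theorem myscale (q : ℚ) (d : ℕ) (h : q.den ∣ d) :
    ((q.num * (d / q.den : ℕ) : ℤ) : ℚ) = d * q := by
  obtain ⟨k, hk⟩ := h
  subst hk
  rw [Nat.mul_div_cancel_left _ q.pos]
  push_cast
  rw [myhden]; ring

/-- Gordan's lemma: the intersection of the lattice `ℤⁿ` with the convex cone
in `ℚⁿ` generated by finitely many vectors is a finitely generated monoid. -/
theorem stmt2 (n m : ℕ) (v : Fin m → (Fin n → ℚ)) (C : AddSubmonoid (Fin n → ℤ))
    (hC : ∀ x : Fin n → ℤ,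
      x ∈ C ↔ (fun i => (x i : ℚ)) ∈ Submodule.span {c : ℚ // 0 ≤ c} (Set.range v)) :
    C.FG := by
  classical
  set d : ℕ := ∏ i : Fin m, ∏ j : Fin n, (v i j).den with hdd
  have hd0 : 0 < d := Finset.prod_pos fun i _ => Finset.prod_pos fun j _ => (v i j).pos
  have hdvd : ∀ i j, (v i j).den ∣ d := fun i j =>
    dvd_trans (Finset.dvd_prod_of_mem (fun j => (v i j).den) (Finset.mem_univ j))
      (Finset.dvd_prod_of_mem (fun i => ∏ j, (v i j).den) (Finset.mem_univ i))
  set w : Fin m → Fin n → ℤ := fun i j => (v i j).num * ((d / (v i j).den : ℕ) : ℤ) with hw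
  have hwq : ∀ i j, ((w i j : ℤ) : ℚ) = (d : ℚ) * v i j := fun i j => myscale _ _ (hdvd i j)
  have hwC : ∀ i, w i ∈ C := by
    intro i
    rw [hC]
    have he : (fun j => ((w i j : ℚ))) = (⟨(d : ℚ), by positivity⟩ : {c : ℚ // 0 ≤ c}) • v i := by
      funext j; rw [hwq]; rfl
    rw [he]
    exact Submodule.smul_mem _ _ (Submodule.subset_span ⟨i, rfl⟩)
  set B : Fin n → ℤ := fun j => ∑ i, |w i j| with hB
  set T : Set (Fin n → ℤ) := {x | ∀ j, x j ∈ Set.Icc (-(B j)) (B j)} with hT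
  have hTfin : T.Finite := by
    have h := Set.Finite.pi (fun j : Fin n => Set.finite_Icc (-(B j)) (B j))
    exact h.subset (fun x hx j _ => hx j)
  set G : Set (Fin n → ℤ) := Set.range w ∪ (T ∩ ↑C) with hG
  have hGfin : G.Finite := (Set.finite_range w).union (hTfin.inter_of_left _)
  rw [AddSubmonoid.fg_iff]
  refine ⟨G, ?_, hGfin⟩
  apply le_antisymm
  · rw [AddSubmonoid.closure_le]
    rintro x (⟨i, rfl⟩ | ⟨-, hx⟩)
    · exact hwC i
    · exact hx
  · intro x hx
    obtain ⟨c, hc⟩ := (Submodule.mem_span_range_iff_exists_fun _).mp ((hC x).mp hx)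
    have hxq : ∀ j, ((x j : ℚ)) = ∑ i, (c i : ℚ) * v i j := by
      intro j
      have h := congrFun hc j
      rw [Finset.sum_apply] at h
      exact h.symm
    have hdq : (0:ℚ) < (d:ℚ) := by positivity
    set qc : Fin m → ℚ := fun i => ((c i : ℚ)) with hqc
    set a : Fin m → ℕ := fun i => (⌊qc i / (d:ℚ)⌋).toNat with ha
    have haq : ∀ i, ((a i : ℚ)) = ((⌊qc i / (d:ℚ)⌋ : ℤ) : ℚ) := by
      intro i
      have h0 : (0 : ℤ) ≤ ⌊qc i / (d:ℚ)⌋ :=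
        Int.floor_nonneg.mpr (div_nonneg (c i).2 hdq.le)
      show (((⌊qc i / (d:ℚ)⌋).toNat : ℚ)) = ((⌊qc i / (d:ℚ)⌋ : ℤ) : ℚ)
      exact_mod_cast congrArg (fun z : ℤ => (z : ℚ)) (Int.toNat_of_nonneg h0)
    set s : Fin m → ℚ := fun i => qc i - a i * d with hs
    have hs0 : ∀ i, 0 ≤ s i := by
      intro i
      have h := Int.floor_le (qc i / (d:ℚ))
      rw [hs]
      simp only []
      rw [haq i]
      rw [le_div_iff₀ hdq] at h
      linarith
    have hsd : ∀ i, s i ≤ d := by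
      intro i
      have h := Int.lt_floor_add_one (qc i / (d:ℚ))
      rw [div_lt_iff₀ hdq] at h
      rw [hs]; simp only []; rw [haq i]
      nlinarith [h]
    set r : Fin n → ℤ := x - ∑ i, (a i) • w i with hr
    have hrq : ∀ j, ((r j : ℚ)) = ∑ i, s i * v i j := by
      intro j
      have h1 : r j = x j - ∑ i, (a i : ℤ) * w i j := by
        rw [hr]; simp [Finset.sum_apply]
      rw [h1]
      push_cast
      rw [hxq j, ← Finset.sum_sub_distrib]
      refine Finset.sum_congr rfl fun i _ => ?_
      rw [hwq i j, hs]; ring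
    have hrC : r ∈ C := by
      rw [hC]
      have he : (fun j => ((r j : ℚ))) = ∑ i, (⟨s i, hs0 i⟩ : {c : ℚ // 0 ≤ c}) • v i := by
        funext j
        rw [hrq j, Finset.sum_apply]
        rfl
      rw [he]
      exact Submodule.sum_mem _ fun i _ => Submodule.smul_mem _ _ (Submodule.subset_span ⟨i, rfl⟩)
    have hrT : r ∈ T := by
      intro j
      rw [Set.mem_Icc, ← abs_le]
      have h1 : |((r j : ℚ))| ≤ (B j : ℚ) := by
        rw [hrq j]
        refine le_trans (Finset.abs_sum_le_sum_abs _ _) ?_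
        rw [hB]
        push_cast
        refine Finset.sum_le_sum fun i _ => ?_
        rw [abs_mul]
        calc |s i| * |v i j| = s i * |v i j| := by rw [abs_of_nonneg (hs0 i)]
          _ ≤ d * |v i j| := by
              exact mul_le_mul_of_nonneg_right (hsd i) (abs_nonneg _)
          _ = |(w i j : ℚ)| := by rw [hwq i j, abs_mul, abs_of_nonneg (by positivity : (0:ℚ) ≤ (d:ℚ))]
      have h2 : |((r j : ℚ))| = ((|r j| : ℤ) : ℚ) := by push_cast; rfl
      rw [h2] at h1
      exact_mod_cast h1
    have hxeq : x = (∑ i, (a i) • w i) + r := by rw [hr]; abel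
    rw [hxeq]
    have h1 : (∑ i, (a i) • w i) ∈ AddSubmonoid.closure G := by
      refine sum_mem fun i _ => ?_
      have hmem : w i ∈ G := Set.mem_union_left _ (Set.mem_range_self i)
      exact nsmul_mem (AddSubmonoid.subset_closure hmem) _
    have hmem2 : r ∈ G := Set.mem_union_right _ ⟨hrT, hrC⟩
    exact add_mem h1 (AddSubmonoid.subset_closure hmem2)
end

section
/- Let Λ be a finitely generated commutative monoid and S a Λ-graded commutative k-algebra with each homogeneous component S(λ) finite-dimensional over k and with S(λ)S(μ) spanning S(λ+μ). Then S is a finitely generated k-algebra. -/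
/-! Since `A l * A m` spans `A (l + m)`, the subalgebra generated by the components `A l` for `l`
among `0` and finitely many generators of `Λ` contains every component, hence all of `S`.
Finite bases of these finitely many finite-dimensional components therefore generate `S`. -/

theorem Subalgebra.fg_adjoin_of_fg {R S : Type*} [CommSemiring R] [Semiring S] [Algebra R S]
    {M : Submodule R S} (hM : M.FG) : (Algebra.adjoin R (M : Set S)).FG := by
  obtain ⟨t, rfl⟩ := hM
  rw [Algebra.adjoin_span]
  exact Subalgebra.fg_adjoin_finset t

section GradedFamily

variable {R S Λ : Type*} [CommSemiring R] [Semiring S] [Algebra R S] [AddMonoid Λ]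
  (A : Λ → Submodule R S)

theorem Subalgebra.le_toSubmodule_of_mem_closure (hmul : ∀ l m : Λ, A (l + m) ≤ A l * A m)
    (B : Subalgebra R S) {T : Set Λ}
    (h0 : A 0 ≤ Subalgebra.toSubmodule B) (hT : ∀ l ∈ T, A l ≤ Subalgebra.toSubmodule B)
    {l : Λ} (hl : l ∈ AddSubmonoid.closure T) : A l ≤ Subalgebra.toSubmodule B := by
  induction hl using AddSubmonoid.closure_induction with
  | mem x hx => exact hT x hx
  | zero => exact h0
  | add x y _ _ hx hy =>
    refine (hmul x y).trans (Submodule.mul_le.2 fun a ha c hc => ?_)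
    exact B.mul_mem (hx ha) (hy hc)

theorem Algebra.FiniteType.of_iSup_eq_top [AddMonoid.FG Λ]
    (hmul : ∀ l m : Λ, A (l + m) ≤ A l * A m) (htop : ⨆ l, A l = ⊤)
    (hfg : ∀ l, (A l).FG) : Algebra.FiniteType R S := by
  classical
  obtain ⟨T, hT⟩ := AddMonoid.fg_def.mp ‹AddMonoid.FG Λ›
  let M := ⨆ l ∈ insert 0 T, A l
  let B := Algebra.adjoin R (M : Set S)
  have hM : ∀ l ∈ insert 0 T, A l ≤ Subalgebra.toSubmodule B := fun l hl =>
    (le_biSup A hl).trans (Algebra.subset_adjoin (s := (M : Set S)))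
  have hB : B = ⊤ := by
    rw [← Algebra.toSubmodule_eq_top, ← top_le_iff, ← htop]
    refine iSup_le fun l => ?_
    refine Subalgebra.le_toSubmodule_of_mem_closure A hmul B (hM 0 (Finset.mem_insert_self 0 T))
      (fun l hl => hM l (Finset.mem_insert_of_mem hl)) (hT ▸ AddSubmonoid.mem_top l)
  exact ⟨hB ▸ Subalgebra.fg_adjoin_of_fg (Submodule.fg_biSup _ A fun l _ => hfg l)⟩

end GradedFamily

/-- a `Λ`-graded commutative `k`-algebra with `Λ` a finitely generated
commutative monoid, finite-dimensional homogeneous components, and `A λ · A μ` spanning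
`A (λ+μ)`, is a finitely generated `k`-algebra. -/
theorem stmt10 {k S Λ : Type*} [Field k] [AddCommMonoid Λ] [DecidableEq Λ] [AddMonoid.FG Λ]
    [CommRing S] [Algebra k S]
    (A : Λ → Submodule k S) (hint : DirectSum.IsInternal A)
    (hfin : ∀ l : Λ, FiniteDimensional k (A l))
    (hmul : ∀ l m : Λ, A l * A m = A (l + m)) :
    Algebra.FiniteType k S :=
  Algebra.FiniteType.of_iSup_eq_top A (fun l m => (hmul l m).ge) hint.submodule_iSup_eq_top
    fun l => (Submodule.fg_iff_finiteDimensional (A l)).2 (hfin l)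
end
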